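/- arXiv:1808.05200 — 2 statements merged into one kernel-verified Lean document; each statement's English description precedes it below -/
import Mathlib

section
/- Let P be a locally finite poset colored by a finite simple graph Γ satisfying EC and ND. Then the commutator relation [X_b, X_a] = 0 holds for all pairs of distant colors a, b (distinct and non-adjacent in Γ) if and only if P satisfies NA: any two neighbors in P have adjacent colors in Γ. -/
open Finsupp

section ColoredPosets

open scoped Classical

variable {P : Type*} {Γ : Type*} [PartialOrder P]

/-- `x` is a minimal element of the subset `F`. -/
def MinIn (F : Set P) (x : P) : Prop := x ∈ F ∧ ∀ y ∈ F, y ≤ x → y = x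

/-- `y` is a maximal element of the complement (the ideal) of `F`. -/
def MaxInCompl (F : Set P) (y : P) : Prop := y ∉ F ∧ ∀ z, z ∉ F → y ≤ z → z = y

/-- A split of `P`, recorded by its filter part; the ideal is the complement. -/
abbrev Split (P : Type*) [PartialOrder P] := {F : Set P // IsUpperSet F}

theorem upper_erase {F : Set P} (hF : IsUpperSet F) {x : P} (hx : MinIn F x) :
    IsUpperSet (F \ {x}) := by
  intro u v huv hu
  refine ⟨hF huv hu.1, fun hv => ?_⟩
  rw [Set.mem_singleton_iff] at hv
  subst hv
  exact hu.2 (Set.mem_singleton_iff.mpr (hx.2 u hu.1 huv))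

theorem upper_insert {F : Set P} (hF : IsUpperSet F) {y : P} (hy : MaxInCompl F y) :
    IsUpperSet (insert y F) := by
  intro u v huv hu
  rcases hu with rfl | hu
  · by_cases hvF : v ∈ F
    · exact Set.mem_insert_of_mem _ hvF
    · rw [hy.2 v hvF huv]; exact Set.mem_insert _ _
  · exact Set.mem_insert_of_mem _ (hF huv hu)

/-- The image of the basis vector `⟨F,I⟩` under the color raising operator `X_a`:
the sum of `⟨F-x, I+x⟩` over all minimal elements `x` of `F` of color `a`. -/
noncomputable def XF (κ : P → Γ) (a : Γ) (F : Split P) : Split P →₀ ℂ :=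
  ∑ᶠ x : P, if h : MinIn F.1 x ∧ κ x = a then
    Finsupp.single ⟨F.1 \ {x}, upper_erase F.2 h.1⟩ 1 else 0

/-- The color raising operator `X_a` on the free complex vector space on splits. -/
noncomputable def Xop (κ : P → Γ) (a : Γ) : Module.End ℂ (Split P →₀ ℂ) :=
  Finsupp.linearCombination ℂ (XF κ a)

/-- The image of the basis vector `⟨F,I⟩` under the color lowering operator `Y_a`:
the sum of `⟨F+y, I-y⟩` over all maximal elements `y` of `I` of color `a`. -/
noncomputable def YF (κ : P → Γ) (a : Γ) (F : Split P) : Split P →₀ ℂ :=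
  ∑ᶠ y : P, if h : MaxInCompl F.1 y ∧ κ y = a then
    Finsupp.single ⟨insert y F.1, upper_insert F.2 h.1⟩ 1 else 0

/-- The color lowering operator `Y_a`. -/
noncomputable def Yop (κ : P → Γ) (a : Γ) : Module.End ℂ (Split P →₀ ℂ) :=
  Finsupp.linearCombination ℂ (YF κ a)

/-- The diagonal operator with eigenvalue function `η a`. -/
noncomputable def Hop (η : Γ → Split P → ℂ) (a : Γ) : Module.End ℂ (Split P →₀ ℂ) :=
  Finsupp.linearCombination ℂ (fun F => η a F • Finsupp.single F (1 : ℂ))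

/-- The generalized Cartan matrix entries of the simple graph `Γ`. -/
noncomputable def theta (G : SimpleGraph Γ) (a b : Γ) : ℤ :=
  if a = b then 2 else if G.Adj a b then -1 else 0

/-- `Δ_b[(F',I'),(F,I)] = |P_b ∩ (I'−I)| − |P_b ∩ (I−I')|`. -/
noncomputable def Delta (κ : P → Γ) (b : Γ) (F' F : Split P) : ℤ :=
  (Nat.card {x : P // κ x = b ∧ x ∈ F.1 ∧ x ∉ F'.1} : ℤ)
    - (Nat.card {x : P // κ x = b ∧ x ∈ F'.1 ∧ x ∉ F.1} : ℤ)

/-- One covering step upward in the Hasse diagram of `FI(P)`: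
a minimal element of the filter is transferred to the ideal. -/
def SplitStep (F G : Split P) : Prop := ∃ x, MinIn F.1 x ∧ G.1 = F.1 \ {x}

/-- Two splits are in the same component when joined by a finite path in the
Hasse diagram of `FI(P)`, edges traversed in either direction. -/
def SameComponent (F G : Split P) : Prop :=
  Relation.ReflTransGen (fun A B => SplitStep A B ∨ SplitStep B A) F G

/-- Sum over the colors adjacent to `b` in `Γ`. -/
noncomputable def adjSum [Fintype Γ] (G : SimpleGraph Γ) (b : Γ) (f : Γ → ℤ) : ℤ :=
  ∑ c ∈ Finset.univ.filter (fun c => G.Adj c b), f c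

/-- An edge weight function on `FI(P)`. -/
def IsEdgeWeight (G : SimpleGraph Γ) (κ : P → Γ) (η : Γ → Split P → ℂ) : Prop :=
  ∀ (b : Γ) (F : Split P) (x : P) (hx : MinIn F.1 x),
    η b ⟨F.1 \ {x}, upper_erase F.2 hx⟩ - η b F = ((theta G (κ x) b : ℤ) : ℂ)

/-- A component weight function on `FI(P)`. -/
def IsComponentWeight [Fintype Γ] (G : SimpleGraph Γ) (κ : P → Γ)
    (η : Γ → Split P → ℂ) : Prop :=
  ∀ (b : Γ) (F F' : Split P), SameComponent F F' →
    η b F' - η b F =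
      ((2 * Delta κ b F' F - adjSum G b (fun c => Delta κ c F' F) : ℤ) : ℂ)


theorem minin_unique {κ : P → Γ} (hEC : ∀ x y : P, κ x = κ y → x ≤ y ∨ y ≤ x)
    {F : Set P} {x y : P} (hx : MinIn F x) (hy : MinIn F y) (h : κ x = κ y) : x = y := by
  rcases hEC x y h with h' | h'
  · exact hy.2 x hx.1 h'
  · exact (hx.2 y hy.1 h').symm

theorem XF_eq {κ : P → Γ} (hEC : ∀ x y : P, κ x = κ y → x ≤ y ∨ y ≤ x)
    {a : Γ} {F : Split P} {x : P} (hx : MinIn F.1 x) (ha : κ x = a) :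
    XF κ a F = Finsupp.single ⟨F.1 \ {x}, upper_erase F.2 hx⟩ 1 := by
  rw [XF, finsum_eq_single _ x, dif_pos ⟨hx, ha⟩]
  intro x' hne
  rw [dif_neg]
  rintro ⟨hx', ha'⟩
  exact hne (minin_unique hEC hx' hx (ha'.trans ha.symm))

theorem XF_eq_zero {κ : P → Γ} {a : Γ} {F : Split P}
    (h : ∀ x : P, MinIn F.1 x → κ x ≠ a) : XF κ a F = 0 := by
  rw [XF]
  apply finsum_eq_zero_of_forall_eq_zero
  intro x
  rw [dif_neg]
  rintro ⟨h1, h2⟩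
  exact h x h1 h2

theorem Xop_single (κ : P → Γ) (a : Γ) (F : Split P) :
    Xop κ a (Finsupp.single F 1) = XF κ a F := by
  simp [Xop, Finsupp.linearCombination_single]

theorem min_erase_min {κ : P → Γ} {G : SimpleGraph Γ}
    (hNA : ∀ u v : P, u ⋖ v → G.Adj (κ u) (κ v)) {F : Split P} {x y : P}
    (hx : MinIn F.1 x) (hne : κ x ≠ κ y) (hnadj : ¬ G.Adj (κ x) (κ y))
    (hy : MinIn (F.1 \ {x}) y) : MinIn F.1 y := by
  refine ⟨hy.1.1, fun z hz hzy => ?_⟩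
  by_cases hzx : z = x
  · subst hzx
    exfalso
    have hxy : z < y := lt_of_le_of_ne hzy (fun h => hne (by rw [h]))
    have hcov : z ⋖ y := by
      refine ⟨hxy, fun w hzw hwy => ?_⟩
      have hwF : w ∈ F.1 := F.2 hzw.le hz
      have : w = y := hy.2 w ⟨hwF, fun hw => hzw.ne' (Set.mem_singleton_iff.mp hw)⟩ hwy.le
      exact hwy.ne this
    exact hnadj (hNA z y hcov)
  · exact hy.2 z ⟨hz, fun hw => hzx (Set.mem_singleton_iff.mp hw)⟩ hzy

theorem comm_single {κ : P → Γ} (G : SimpleGraph Γ)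
    (hEC : ∀ x y : P, κ x = κ y → x ≤ y ∨ y ≤ x)
    (hNA : ∀ u v : P, u ⋖ v → G.Adj (κ u) (κ v))
    {a b : Γ} (hab : a ≠ b) (hnadj : ¬ G.Adj a b) (F : Split P) :
    Xop κ b (XF κ a F) = Xop κ a (XF κ b F) := by
  by_cases ha : ∃ x, MinIn F.1 x ∧ κ x = a
  · obtain ⟨x, hx, hxa⟩ := ha
    by_cases hb : ∃ y, MinIn F.1 y ∧ κ y = b
    · obtain ⟨y, hy, hyb⟩ := hb
      have hxy : x ≠ y := fun h => hab (by rw [← hxa, ← hyb, h])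
      have hyG : MinIn (F.1 \ {x}) y :=
        ⟨⟨hy.1, fun h => hxy (Set.mem_singleton_iff.mp h).symm⟩,
          fun z hz hzy => hy.2 z hz.1 hzy⟩
      have hxG : MinIn (F.1 \ {y}) x :=
        ⟨⟨hx.1, fun h => hxy (Set.mem_singleton_iff.mp h)⟩,
          fun z hz hzx => hx.2 z hz.1 hzx⟩
      rw [XF_eq hEC hx hxa, XF_eq hEC hy hyb, Xop_single, Xop_single,
        XF_eq hEC hyG hyb, XF_eq hEC hxG hxa]
      have hsets : ((F.1 \ {x}) \ {y} : Set P) = (F.1 \ {y}) \ {x} := by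
        rw [Set.diff_diff, Set.diff_diff, Set.union_comm]
      congr 1
      exact Subtype.ext hsets
    · have hGz : XF κ b (⟨F.1 \ {x}, upper_erase F.2 hx⟩ : Split P) = 0 := by
        apply XF_eq_zero
        intro z hz hzb
        refine hb ⟨z, min_erase_min hNA hx ?_ ?_ hz, hzb⟩
        · rw [hxa, hzb]; exact hab
        · rw [hxa, hzb]; exact hnadj
      have hFz : XF κ b F = 0 := XF_eq_zero (fun z hz hzb => hb ⟨z, hz, hzb⟩)
      rw [XF_eq hEC hx hxa, Xop_single, hGz, hFz, map_zero]
  · by_cases hb : ∃ y, MinIn F.1 y ∧ κ y = b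
    · obtain ⟨y, hy, hyb⟩ := hb
      have hGz : XF κ a (⟨F.1 \ {y}, upper_erase F.2 hy⟩ : Split P) = 0 := by
        apply XF_eq_zero
        intro z hz hza
        refine ha ⟨z, min_erase_min hNA hy ?_ ?_ hz, hza⟩
        · rw [hyb, hza]; exact hab.symm
        · rw [hyb, hza]; exact fun h => hnadj h.symm
      have hFz : XF κ a F = 0 := XF_eq_zero (fun z hz hza => ha ⟨z, hz, hza⟩)
      rw [XF_eq hEC hy hyb, Xop_single, hGz, hFz, map_zero]
    · rw [XF_eq_zero (fun z hz hza => ha ⟨z, hz, hza⟩),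
        XF_eq_zero (fun z hz hzb => hb ⟨z, hz, hzb⟩), map_zero, map_zero]

/-- Under EC and ND, `[X_b, X_a] = 0` for all distant colors iff NA holds. -/
theorem stmt2 [LocallyFiniteOrder P] [Fintype Γ] (G : SimpleGraph Γ)
    (κ : P → Γ) (hsurj : Function.Surjective κ)
    (hEC : ∀ x y : P, κ x = κ y → x ≤ y ∨ y ≤ x)
    (hND : ∀ x y : P, x ⋖ y → κ x ≠ κ y) :
    (∀ a b : Γ, a ≠ b → ¬ G.Adj a b → Xop κ b * Xop κ a - Xop κ a * Xop κ b = 0) ↔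
      (∀ x y : P, x ⋖ y → G.Adj (κ x) (κ y)) := by
  constructor
  · intro hcomm x y hxy
    by_contra hnadj
    have hab : κ x ≠ κ y := hND x y hxy
    have h0 := hcomm (κ x) (κ y) hab hnadj
    set F : Split P := ⟨Set.Ici x, isUpperSet_Ici x⟩ with hF
    have hminF : MinIn F.1 x := ⟨le_refl x, fun z hz hzx => le_antisymm hzx hz⟩
    have hminG : MinIn (F.1 \ {x}) y := by
      refine ⟨⟨hxy.lt.le, fun h => hxy.lt.ne' (Set.mem_singleton_iff.mp h)⟩,
        fun z hz hzy => ?_⟩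
      by_contra hne
      exact hxy.2 (lt_of_le_of_ne hz.1 (fun h => hz.2 (Set.mem_singleton_iff.mpr h.symm)))
        (lt_of_le_of_ne hzy hne)
    have h2 : XF κ (κ y) F = 0 := by
      apply XF_eq_zero
      intro z hz hzb
      have hxz : x = z := hz.2 x (le_refl x) hz.1
      exact hab (hxz ▸ hzb)
    have h3 := congrArg (fun T : Module.End ℂ (Split P →₀ ℂ) =>
      T (Finsupp.single F 1)) h0
    simp only [LinearMap.sub_apply, Module.End.mul_apply, LinearMap.zero_apply,
      sub_eq_zero] at h3
    rw [Xop_single, Xop_single, h2, map_zero, XF_eq hEC hminF rfl, Xop_single,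
      XF_eq hEC hminG rfl] at h3
    exact one_ne_zero (Finsupp.single_eq_zero.mp h3)
  · intro hNA a b hab hnadj
    have h : Xop κ b * Xop κ a = Xop κ a * Xop κ b := by
      apply Finsupp.lhom_ext
      intro F c
      rw [Module.End.mul_apply, Module.End.mul_apply, ← Finsupp.smul_single_one,
        map_smul, map_smul, map_smul, map_smul, Xop_single, Xop_single]
      exact congrArg _ (comm_single G hEC hNA hab hnadj F)
    rw [h]
    exact sub_self (Xop κ a * Xop κ b)


end ColoredPosets
end

section
/- Let P be a locally finite poset colored by a finite simple graph Γ satisfying EC and ND. Then the Serre-type relation [X_a, [X_a, X_b]] = 0 holds for all colors a, b if and only if P satisfies I3ND: whenever three successive covering relations x → y → z form a closed interval [x,z] = {x,y,z} in P, the elements x and z have different colors. -/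
open Finsupp

section ColoredPosets

open scoped Classical

variable {P : Type*} {Γ : Type*} [PartialOrder P]

/-! ### Auxiliary lemmas -/

section Aux

variable {κ : P → Γ}

theorem minIn_unique (hEC : ∀ x y : P, κ x = κ y → x ≤ y ∨ y ≤ x)
    {F : Set P} {x x' : P} (hx : MinIn F x) (hx' : MinIn F x') (h : κ x = κ x') : x = x' := by
  rcases hEC x x' h with h1 | h1
  · exact hx'.2 x hx.1 h1
  · exact (hx.2 x' hx'.1 h1).symm

theorem Xop_single_eq (hEC : ∀ x y : P, κ x = κ y → x ≤ y ∨ y ≤ x) {a : Γ} {F : Split P}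
    {x : P} (h : MinIn F.1 x ∧ κ x = a) :
    Xop κ a (Finsupp.single F 1) =
      Finsupp.single ⟨F.1 \ {x}, upper_erase F.2 h.1⟩ 1 := by
  rw [Xop, Finsupp.linearCombination_single, one_smul, XF, finsum_eq_single _ x, dif_pos h]
  intro x' hx'
  rw [dif_neg]
  rintro ⟨h1, h2⟩
  exact hx' (minIn_unique hEC h1 h.1 (h2.trans h.2.symm))

theorem Xop_single_zero {a : Γ} {F : Split P}
    (h : ¬ ∃ x, MinIn F.1 x ∧ κ x = a) :
    Xop κ a (Finsupp.single F 1) = 0 := by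
  rw [Xop, Finsupp.linearCombination_single, one_smul, XF]
  exact finsum_eq_zero_of_forall_eq_zero fun x => dif_neg fun hx => h ⟨x, hx⟩

theorem no_same_color_min (hEC : ∀ x y : P, κ x = κ y → x ≤ y ∨ y ≤ x)
    (hND : ∀ x y : P, x ⋖ y → κ x ≠ κ y) {F : Split P} {x w : P}
    (hx : MinIn F.1 x) (hw : MinIn (F.1 \ {x}) w) (hcol : κ w = κ x) : False := by
  have hwx : w ≠ x := hw.1.2
  have hlt : x < w := by
    rcases hEC w x hcol with h1 | h1
    · exact absurd (hx.2 w hw.1.1 h1) hwx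
    · exact lt_of_le_of_ne h1 (Ne.symm hwx)
  have hcov : x ⋖ w := by
    refine ⟨hlt, fun c hc1 hc2 => ?_⟩
    have hcF : c ∈ F.1 := F.2 hc1.le hx.1
    have := hw.2 c ⟨hcF, by simpa using hc1.ne'⟩ hc2.le
    exact absurd this hc2.ne
  exact hND x w hcov hcol.symm

theorem Xsq_zero (hEC : ∀ x y : P, κ x = κ y → x ≤ y ∨ y ≤ x)
    (hND : ∀ x y : P, x ⋖ y → κ x ≠ κ y) (a : Γ) (F : Split P) :
    Xop κ a (Xop κ a (Finsupp.single F 1)) = 0 := by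
  by_cases h : ∃ x, MinIn F.1 x ∧ κ x = a
  · obtain ⟨x, hx⟩ := h
    rw [Xop_single_eq hEC hx]
    apply Xop_single_zero
    rintro ⟨w, hw, hcol⟩
    exact no_same_color_min hEC hND hx.1 hw (hcol.trans hx.2.symm)
  · rw [Xop_single_zero h, map_zero]

theorem XbXa_zero (hEC : ∀ x y : P, κ x = κ y → x ≤ y ∨ y ≤ x)
    (hND : ∀ x y : P, x ⋖ y → κ x ≠ κ y)
    (hI3 : ∀ x y z : P, x ⋖ y → y ⋖ z → Set.Icc x z = {x, y, z} → κ x ≠ κ z)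
    (a b : Γ) (F : Split P) :
    Xop κ a (Xop κ b (Xop κ a (Finsupp.single F 1))) = 0 := by
  by_cases h1 : ∃ x, MinIn F.1 x ∧ κ x = a
  · obtain ⟨x, hx⟩ := h1
    rw [Xop_single_eq hEC hx]
    by_cases h2 : ∃ y, MinIn (F.1 \ {x}) y ∧ κ y = b
    · obtain ⟨y, hy⟩ := h2
      rw [Xop_single_eq hEC hy]
      apply Xop_single_zero
      rintro ⟨z, hz, hcz⟩
      -- z is a minimal element of (F \ {x}) \ {y} of color a = κ x
      have hzF : z ∈ F.1 := hz.1.1.1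
      have hzx : z ≠ x := hz.1.1.2
      have hzy : z ≠ y := hz.1.2
      have hxz : x < z := by
        rcases hEC z x (hcz.trans hx.2.symm) with h | h
        · exact absurd (hx.1.2 z hzF h) hzx
        · exact lt_of_le_of_ne h (Ne.symm hzx)
      have hIoo : ∀ v, x < v → v < z → v = y := by
        intro v hv1 hv2
        by_contra hvy
        have hvF : v ∈ F.1 := F.2 hv1.le hx.1.1
        have := hz.2 v ⟨⟨hvF, by simpa using hv1.ne'⟩, by simpa using hvy⟩ hv2.le
        exact absurd this hv2.ne
      by_cases hmid : x < y ∧ y < z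
      · obtain ⟨hxy, hyz⟩ := hmid
        have hcov1 : x ⋖ y :=
          ⟨hxy, fun c hc1 hc2 => absurd (hIoo c hc1 (hc2.trans hyz)) hc2.ne⟩
        have hcov2 : y ⋖ z :=
          ⟨hyz, fun c hc1 hc2 => absurd (hIoo c (hxy.trans hc1) hc2) hc1.ne'⟩
        have hIcc : Set.Icc x z = {x, y, z} := by
          ext u
          simp only [Set.mem_Icc, Set.mem_insert_iff, Set.mem_singleton_iff]
          constructor
          · rintro ⟨hu1, hu2⟩
            rcases eq_or_lt_of_le hu1 with rfl | hu1'
            · exact Or.inl rfl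
            rcases eq_or_lt_of_le hu2 with rfl | hu2'
            · exact Or.inr (Or.inr rfl)
            · exact Or.inr (Or.inl (hIoo u hu1' hu2'))
          · rintro (rfl | rfl | rfl)
            · exact ⟨le_refl _, hxz.le⟩
            · exact ⟨hxy.le, hyz.le⟩
            · exact ⟨hxz.le, le_refl _⟩
        exact hI3 x y z hcov1 hcov2 hIcc (hx.2.trans hcz.symm)
      · have hcov : x ⋖ z := by
          refine ⟨hxz, fun c hc1 hc2 => ?_⟩
          have hcy := hIoo c hc1 hc2
          subst hcy
          exact hmid ⟨hc1, hc2⟩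
        exact hND x z hcov (hx.2.trans hcz.symm)
    · rw [Xop_single_zero h2, map_zero]
  · rw [Xop_single_zero h1, map_zero, map_zero]

end Aux

/-- Under EC and ND, `[X_a,[X_a,X_b]] = 0` for all colors iff I3ND holds. -/
theorem stmt3 [LocallyFiniteOrder P] [Fintype Γ] (G : SimpleGraph Γ)
    (κ : P → Γ) (hsurj : Function.Surjective κ)
    (hEC : ∀ x y : P, κ x = κ y → x ≤ y ∨ y ≤ x)
    (hND : ∀ x y : P, x ⋖ y → κ x ≠ κ y) :
    (∀ a b : Γ,
        Xop κ a * (Xop κ a * Xop κ b - Xop κ b * Xop κ a)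
          - (Xop κ a * Xop κ b - Xop κ b * Xop κ a) * Xop κ a = 0) ↔
      (∀ x y z : P, x ⋖ y → y ⋖ z → Set.Icc x z = {x, y, z} → κ x ≠ κ z) := by
  constructor
  · -- Serre relations imply I3ND
    intro hop x y z hxy hyz hIcc hcol
    have hab : κ x ≠ κ y := hND x y hxy
    set F : Split P := ⟨Set.Ici x, isUpperSet_Ici x⟩ with hF
    have hxmin : MinIn F.1 x := ⟨le_refl x, fun u hu hle => le_antisymm hle hu⟩
    have step1 := Xop_single_eq hEC (κ := κ) (F := F) ⟨hxmin, rfl⟩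
    set F1 : Split P := ⟨F.1 \ {x}, upper_erase F.2 hxmin⟩ with hF1
    have hymin : MinIn F1.1 y := by
      refine ⟨⟨hxy.lt.le, by simpa using hxy.lt.ne'⟩, fun u hu hle => ?_⟩
      by_contra huy
      have hu1 : x < u := lt_of_le_of_ne hu.1 (fun h => hu.2 (by simp [h.symm]))
      exact hxy.2 hu1 (lt_of_le_of_ne hle huy)
    have step2 := Xop_single_eq hEC (κ := κ) (F := F1) ⟨hymin, rfl⟩
    set F2 : Split P := ⟨F1.1 \ {y}, upper_erase F1.2 hymin⟩ with hF2
    have hxz : x < z := hxy.lt.trans hyz.lt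
    have hzmin : MinIn F2.1 z := by
      refine ⟨⟨⟨hxz.le, by simpa using hxz.ne'⟩, by simpa using hyz.lt.ne'⟩,
        fun u hu hle => ?_⟩
      have humem : u ∈ ({x, y, z} : Set P) := hIcc ▸ Set.mem_Icc.mpr ⟨hu.1.1, hle⟩
      rcases humem with h | h | h
      · exact absurd (Set.mem_singleton_iff.mpr h) hu.1.2
      · exact absurd (Set.mem_singleton_iff.mpr h) hu.2
      · exact h
    have step3 := Xop_single_eq hEC (κ := κ) (F := F2) ⟨hzmin, hcol.symm⟩
    set F3 : Split P := ⟨F2.1 \ {z}, upper_erase F2.2 hzmin⟩ with hF3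
    have hBv : Xop κ (κ y) (Finsupp.single F (1 : ℂ)) = 0 := by
      apply Xop_single_zero
      rintro ⟨w, hw, hcw⟩
      have hwx : x = w := hw.2 x Set.self_mem_Ici hw.1
      exact hab (by rw [hwx]; exact hcw)
    have hAAv := Xsq_zero hEC hND (κ x) F
    have := congrArg (fun f => f (Finsupp.single F (1 : ℂ))) (hop (κ x) (κ y))
    simp only [LinearMap.sub_apply, Module.End.mul_apply, map_sub, LinearMap.zero_apply] at this
    rw [hBv, hAAv, map_zero, map_zero, map_zero] at this
    rw [step1, step2, step3] at this
    have heval := DFunLike.congr_fun this F3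
    simp [Finsupp.single_eq_same] at heval
    norm_num at heval
  · -- I3ND implies Serre relations
    intro hI3 a b
    refine Finsupp.lhom_ext fun F c => ?_
    have hc : (Finsupp.single F c : Split P →₀ ℂ) = c • Finsupp.single F 1 := by
      rw [Finsupp.smul_single', mul_one]
    have key : (Xop κ a * (Xop κ a * Xop κ b - Xop κ b * Xop κ a)
        - (Xop κ a * Xop κ b - Xop κ b * Xop κ a) * Xop κ a)
          (Finsupp.single F (1 : ℂ)) = 0 := by
      simp only [LinearMap.sub_apply, Module.End.mul_apply, map_sub]
      rw [XbXa_zero hEC hND hI3, Xsq_zero hEC hND, map_zero]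
      have hAAB : Xop κ a (Xop κ a (Xop κ b (Finsupp.single F (1 : ℂ)))) = 0 := by
        by_cases h : ∃ y, MinIn F.1 y ∧ κ y = b
        · obtain ⟨y, hy⟩ := h
          rw [Xop_single_eq hEC hy]
          exact Xsq_zero hEC hND a _
        · rw [Xop_single_zero h, map_zero, map_zero]
      rw [hAAB]
      simp
    rw [hc, map_smul, key, smul_zero, LinearMap.zero_apply]


end ColoredPosets
end
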